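/- Let R > 0 and φ > 0, let N and K be positive integers, let λ : Fin N → ℝ, and let μ : Fin (2K) → ℝ be a family enumerated as {+μ_l, −μ_l : l = 1,…,K} with each μ_l ≥ 0 and not all μ_l equal to zero. Set M_μ = max_i |μ_i|, σ_μ = sqrt( (2K)^{-1} ∑_i μ_i² ), and s_M = (cosh(2R M_μ) − 1)/M_μ. Then F = (2KN)^{-1} ∑_{n=1}^{N} ∑_{i=1}^{2K} E_τ[ log{ 1 + e^{−2R(λ_n + μ_i)} e^{−2φ√R τ − 2R} } ] satisfies F ≤ N^{-1} ∑_{n=1}^{N} E_τ[ (1/2) log{ 1 + 2 (s_M σ_μ + 1) e^{−2Rλ_n} e^{−2φ√R τ − 2R} + e^{−4Rλ_n} e^{−4φ√R τ − 4R} } ]. -/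

import Mathlib

open MeasureTheory Real

/-- Expectation with respect to a standard Gaussian variable `τ`. -/
noncomputable def gaussExp (p : ℝ → ℝ) : ℝ :=
  ∫ τ : ℝ, (Real.sqrt (2 * Real.pi))⁻¹ * Real.exp (-τ ^ 2 / 2) * p τ

section FMu2Aux

lemma integrable_gauss_lin (c : ℝ) :
    Integrable (fun τ : ℝ => Real.exp (-τ ^ 2 / 2 + c * τ)) := by
  have h : Integrable (fun τ : ℝ =>
      Real.exp (c ^ 2 / 2) * Real.exp (-(1/2 : ℝ) * (τ - c) ^ 2)) :=
    ((integrable_exp_neg_mul_sq (by norm_num : (0:ℝ) < 1/2)).comp_sub_right c).const_mul _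
  refine h.congr (Filter.Eventually.of_forall fun τ => ?_)
  dsimp only
  rw [← Real.exp_add]; congr 1; ring

lemma integrable_w_mul (C c : ℝ) :
    Integrable (fun τ : ℝ => (Real.sqrt (2 * Real.pi))⁻¹ * Real.exp (-τ ^ 2 / 2) *
      (C * Real.exp (c * τ))) := by
  have h := (integrable_gauss_lin c).const_mul ((Real.sqrt (2 * Real.pi))⁻¹ * C)
  refine h.congr (Filter.Eventually.of_forall fun τ => ?_)
  dsimp only
  rw [Real.exp_add]; ring

lemma integrable_w_log (u : ℝ → ℝ) (hu : Continuous u) (hu0 : ∀ τ, 0 ≤ u τ)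
    (hint : Integrable (fun τ : ℝ =>
      (Real.sqrt (2 * Real.pi))⁻¹ * Real.exp (-τ ^ 2 / 2) * u τ)) :
    Integrable (fun τ : ℝ => (Real.sqrt (2 * Real.pi))⁻¹ * Real.exp (-τ ^ 2 / 2) *
      Real.log (1 + u τ)) := by
  have hw : ∀ τ : ℝ, 0 ≤ (Real.sqrt (2 * Real.pi))⁻¹ * Real.exp (-τ ^ 2 / 2) :=
    fun τ => by positivity
  have hcont : Continuous fun τ : ℝ => (Real.sqrt (2 * Real.pi))⁻¹ * Real.exp (-τ ^ 2 / 2) *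
      Real.log (1 + u τ) := by
    refine Continuous.mul (by continuity) ?_
    exact (continuous_const.add hu).log fun τ => by have := hu0 τ; exact (by linarith : (0:ℝ) < 1 + u τ).ne'
  refine hint.mono' hcont.aestronglyMeasurable (Filter.Eventually.of_forall fun τ => ?_)
  have h1 : (0:ℝ) < 1 + u τ := by have := hu0 τ; linarith
  have h2 : 0 ≤ Real.log (1 + u τ) := Real.log_nonneg (by linarith [hu0 τ])
  have h3 : Real.log (1 + u τ) ≤ u τ := by
    have := Real.log_le_sub_one_of_pos h1; linarith
  rw [Real.norm_eq_abs, abs_of_nonneg (mul_nonneg (hw τ) h2)]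
  exact mul_le_mul_of_nonneg_left h3 (hw τ)

lemma chord_cosh (R M x : ℝ) (hM : 0 < M) (hx0 : 0 ≤ x) (hxM : x ≤ M) :
    Real.cosh (2*R*x) ≤ (Real.cosh (2*R*M) - 1)/M * x + 1 := by
  have hθ0 : 0 ≤ x / M := div_nonneg hx0 hM.le
  have hθ1 : x / M ≤ 1 := div_le_one_of_le₀ hxM hM.le
  have key : ∀ s : ℝ, Real.exp (s * x) ≤ x/M * Real.exp (s*M) + (1 - x/M) := by
    intro s
    have hb' : (0:ℝ) ≤ 1 - x/M := by linarith
    have h := convexOn_exp.2 (Set.mem_univ (s*M)) (Set.mem_univ (0:ℝ))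
      hθ0 hb' (by ring)
    simp only [smul_eq_mul, mul_zero, add_zero, Real.exp_zero, mul_one] at h
    have hx' : x/M * (s*M) = s*x := by field_simp
    rwa [hx'] at h
  have h1 := key (2*R)
  have h2 := key (-(2*R))
  rw [neg_mul, neg_mul] at h2
  have hgoal : (Real.cosh (2*R*M) - 1)/M * x = x/M * (Real.cosh (2*R*M) - 1) := by ring
  rw [hgoal, Real.cosh_eq, Real.cosh_eq]
  linarith

lemma key_jensen (K : ℕ) (hK : 0 < K) (m : Fin K → ℝ) (c : ℝ)
    (hc : (K:ℝ)⁻¹ * ∑ l, Real.cosh (m l) ≤ c + 1)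
    (a : ℝ) (ha : 0 < a) :
    ∑ l, (Real.log (1 + a * Real.exp (-(m l))) + Real.log (1 + a * Real.exp (m l)))
      ≤ K * Real.log (1 + 2*(c+1)*a + a^2) := by
  have hKpos : (0:ℝ) < K := by exact_mod_cast hK
  have hpair : ∀ l, Real.log (1 + a * Real.exp (-(m l))) + Real.log (1 + a * Real.exp (m l))
      = Real.log (1 + 2*Real.cosh (m l)*a + a^2) := by
    intro l
    have h1 : (0:ℝ) < 1 + a * Real.exp (-(m l)) := by positivity
    have h2 : (0:ℝ) < 1 + a * Real.exp (m l) := by positivity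
    rw [← Real.log_mul h1.ne' h2.ne']
    congr 1
    rw [Real.cosh_eq, Real.exp_neg]
    have hE : Real.exp (m l) ≠ 0 := (Real.exp_pos _).ne'
    field_simp
    ring
  simp only [hpair]
  have hcosh1 : ∀ l, (1:ℝ) ≤ Real.cosh (m l) := fun l => Real.one_le_cosh (m l)
  have hx : ∀ l, (1 + 2*Real.cosh (m l)*a + a^2) ∈ Set.Ioi (0:ℝ) := by
    intro l
    have := hcosh1 l
    simp only [Set.mem_Ioi]; nlinarith
  have hj := (strictConcaveOn_log_Ioi.concaveOn).le_map_sum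
    (t := Finset.univ) (w := fun _ : Fin K => (K:ℝ)⁻¹)
    (p := fun l => 1 + 2*Real.cosh (m l)*a + a^2)
    (fun _ _ => by positivity)
    (by simp [Finset.card_univ]; field_simp)
    (fun l _ => hx l)
  simp only [smul_eq_mul] at hj
  have hsum : ∑ l, ((K:ℝ)⁻¹ * (1 + 2*Real.cosh (m l)*a + a^2))
      = 1 + 2*((K:ℝ)⁻¹ * ∑ l, Real.cosh (m l))*a + a^2 := by
    rw [← Finset.mul_sum, Finset.sum_add_distrib, Finset.sum_add_distrib,
      Finset.sum_const, Finset.card_univ, Fintype.card_fin, ← Finset.sum_mul,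
      ← Finset.mul_sum]
    field_simp
    rw [Finset.sum_const, Finset.card_univ, Fintype.card_fin, nsmul_eq_mul]
    ring
  rw [hsum] at hj
  have hcoshsum : (K:ℝ) ≤ ∑ l, Real.cosh (m l) := by
    calc (K:ℝ) = ∑ _l : Fin K, (1:ℝ) := by simp
    _ ≤ ∑ l, Real.cosh (m l) := Finset.sum_le_sum fun l _ => hcosh1 l
  have havg1 : (1:ℝ) ≤ (K:ℝ)⁻¹ * ∑ l, Real.cosh (m l) := by
    rw [inv_mul_eq_div, le_div_iff₀ hKpos]; linarith
  have hmono : Real.log (1 + 2*((K:ℝ)⁻¹ * ∑ l, Real.cosh (m l))*a + a^2)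
      ≤ Real.log (1 + 2*(c+1)*a + a^2) :=
    Real.log_le_log (by nlinarith) (by nlinarith)
  calc ∑ l, Real.log (1 + 2*Real.cosh (m l)*a + a^2)
      = (K:ℝ) * ∑ l, (K:ℝ)⁻¹ * Real.log (1 + 2*Real.cosh (m l)*a + a^2) := by
        rw [← Finset.mul_sum, ← mul_assoc, mul_inv_cancel₀ hKpos.ne', one_mul]
    _ ≤ (K:ℝ) * Real.log (1 + 2*((K:ℝ)⁻¹ * ∑ l, Real.cosh (m l))*a + a^2) :=
        mul_le_mul_of_nonneg_left hj hKpos.le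
    _ ≤ (K:ℝ) * Real.log (1 + 2*(c+1)*a + a^2) :=
        mul_le_mul_of_nonneg_left hmono hKpos.le

end FMu2Aux

/-- The cluster-based tightened upper bound `F_M^{u2}` of the paper: within each cluster
centered at `λ_n` it combines concavity and monotonicity in `α` with the chord bound
`cosh(2Rμ) ≤ s_M μ + 1` on `[0, M_μ]` and `|μ|_avg ≤ σ_μ`. -/
theorem F_le_FMu2
    (R φ : ℝ) (hR : 0 < R) (hφ : 0 < φ)
    (N K : ℕ) (hN : 0 < N) (hK : 0 < K)
    (lam : Fin N → ℝ) (μ : Fin (2 * K) → ℝ)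
    (e : Fin K ⊕ Fin K ≃ Fin (2 * K)) (μp : Fin K → ℝ)
    (hpos : ∀ l, μ (e (Sum.inl l)) = μp l)
    (hneg : ∀ l, μ (e (Sum.inr l)) = -μp l)
    (hμp0 : ∀ l, 0 ≤ μp l) (hμpne : ∃ l, μp l ≠ 0)
    (Mμ : ℝ) (hMμ : IsGreatest (Set.range fun i => |μ i|) Mμ)
    (σμ : ℝ) (hσμ : σμ = Real.sqrt (((2 * K : ℕ) : ℝ)⁻¹ * ∑ i, (μ i) ^ 2))
    (sM : ℝ) (hsM : sM = (Real.cosh (2 * R * Mμ) - 1) / Mμ)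
    (F : ℝ)
    (hF : F = ((2 * K * N : ℕ) : ℝ)⁻¹ * ∑ n, ∑ i, gaussExp (fun τ =>
      Real.log (1 + Real.exp (-2 * R * (lam n + μ i)) *
        Real.exp (-2 * φ * Real.sqrt R * τ - 2 * R)))) :
    F ≤ (N : ℝ)⁻¹ * ∑ n, gaussExp (fun τ =>
      (1 / 2) * Real.log (1 + 2 * (sM * σμ + 1) * Real.exp (-2 * R * lam n) *
        Real.exp (-2 * φ * Real.sqrt R * τ - 2 * R) +
        Real.exp (-4 * R * lam n) * Real.exp (-4 * φ * Real.sqrt R * τ - 4 * R))) := by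
  have hKpos : (0:ℝ) < K := by exact_mod_cast hK
  have hNpos : (0:ℝ) < N := by exact_mod_cast hN
  -- positivity of Mμ and basic facts
  obtain ⟨l0, hl0⟩ := hμpne
  have hl0pos : 0 < μp l0 := (hμp0 l0).lt_of_ne (Ne.symm hl0)
  have hle : ∀ l, μp l ≤ Mμ := fun l => by
    have h : |μ (e (Sum.inl l))| ≤ Mμ := hMμ.2 ⟨e (Sum.inl l), rfl⟩
    rwa [hpos l, abs_of_nonneg (hμp0 l)] at h
  have hMpos : 0 < Mμ := lt_of_lt_of_le hl0pos (hle l0)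
  have hσnn : 0 ≤ σμ := by rw [hσμ]; exact Real.sqrt_nonneg _
  have hsM0 : 0 ≤ sM := by
    rw [hsM]
    apply div_nonneg _ hMpos.le
    linarith [Real.one_le_cosh (2*R*Mμ)]
  have hchord : ∀ l, Real.cosh (2*R*μp l) ≤ sM * μp l + 1 := fun l => by
    rw [hsM]; exact chord_cosh R Mμ (μp l) hMpos (hμp0 l) (hle l)
  -- σμ in terms of μp
  have hsum_sq : ∑ i, (μ i)^2 = 2 * ∑ l, (μp l)^2 := by
    rw [← Equiv.sum_comp e (fun i => (μ i)^2), Fintype.sum_sum_type]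
    simp only [hpos, hneg, neg_sq]
    ring
  have hσ' : σμ = Real.sqrt ((K:ℝ)⁻¹ * ∑ l, (μp l)^2) := by
    rw [hσμ, hsum_sq]
    congr 1
    push_cast
    field_simp
  have hμpavg : (K:ℝ)⁻¹ * ∑ l, μp l ≤ σμ := by
    rw [hσ']
    have hnn : 0 ≤ (K:ℝ)⁻¹ * ∑ l, μp l := by
      apply mul_nonneg (by positivity)
      exact Finset.sum_nonneg fun l _ => hμp0 l
    rw [Real.le_sqrt hnn (by positivity)]
    have hcs := sq_sum_le_card_mul_sum_sq
      (s := (Finset.univ : Finset (Fin K))) (f := μp)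
    simp only [Finset.card_univ, Fintype.card_fin] at hcs
    rw [mul_pow]
    calc ((K:ℝ)⁻¹)^2 * (∑ l, μp l)^2 ≤ ((K:ℝ)⁻¹)^2 * ((K:ℝ) * ∑ l, (μp l)^2) :=
          mul_le_mul_of_nonneg_left hcs (by positivity)
      _ = (K:ℝ)⁻¹ * ∑ l, (μp l)^2 := by field_simp
  -- average cosh bound
  have hc : (K:ℝ)⁻¹ * ∑ l, Real.cosh (2*R*μp l) ≤ sM*σμ + 1 := by
    have h1 : ∑ l, Real.cosh (2*R*μp l) ≤ sM * (∑ l, μp l) + K := by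
      calc ∑ l, Real.cosh (2*R*μp l) ≤ ∑ l, (sM * μp l + 1) :=
            Finset.sum_le_sum fun l _ => hchord l
        _ = sM * (∑ l, μp l) + K := by
            rw [Finset.sum_add_distrib, ← Finset.mul_sum]; simp
    have h2 : (K:ℝ)⁻¹ * ∑ l, Real.cosh (2*R*μp l) ≤ (K:ℝ)⁻¹ * (sM * (∑ l, μp l) + K) :=
      mul_le_mul_of_nonneg_left h1 (by positivity)
    have h3 : (K:ℝ)⁻¹ * (sM * (∑ l, μp l) + K) = sM * ((K:ℝ)⁻¹ * ∑ l, μp l) + 1 := by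
      field_simp
    have h4 : sM * ((K:ℝ)⁻¹ * ∑ l, μp l) ≤ sM * σμ :=
      mul_le_mul_of_nonneg_left hμpavg hsM0
    linarith
  have hs1 : (0:ℝ) ≤ sM * σμ + 1 := by positivity
  -- the per-cluster inequality on integrals
  have hmain : ∀ n : Fin N,
      ∑ i, gaussExp (fun τ =>
        Real.log (1 + Real.exp (-2 * R * (lam n + μ i)) *
          Real.exp (-2 * φ * Real.sqrt R * τ - 2 * R)))
      ≤ (2*(K:ℝ)) * gaussExp (fun τ =>
        (1 / 2) * Real.log (1 + 2 * (sM * σμ + 1) * Real.exp (-2 * R * lam n) *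
          Real.exp (-2 * φ * Real.sqrt R * τ - 2 * R) +
          Real.exp (-4 * R * lam n) * Real.exp (-4 * φ * Real.sqrt R * τ - 4 * R))) := by
    intro n
    -- integrability of each summand
    have hfint : ∀ i : Fin (2*K), Integrable (fun τ : ℝ =>
        (Real.sqrt (2 * Real.pi))⁻¹ * Real.exp (-τ ^ 2 / 2) *
        Real.log (1 + Real.exp (-2 * R * (lam n + μ i)) *
          Real.exp (-2 * φ * Real.sqrt R * τ - 2 * R))) := by
      intro i
      apply integrable_w_log
        (u := fun τ => Real.exp (-2 * R * (lam n + μ i)) *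
          Real.exp (-2 * φ * Real.sqrt R * τ - 2 * R))
      · fun_prop
      · intro τ; positivity
      · have h := integrable_w_mul
          (Real.exp (-2 * R * (lam n + μ i)) * Real.exp (-(2*R))) (-(2 * φ * Real.sqrt R))
        refine h.congr (Filter.Eventually.of_forall fun τ => ?_)
        dsimp only
        rw [show -2 * φ * Real.sqrt R * τ - 2 * R
            = (-(2 * φ * Real.sqrt R)) * τ + (-(2*R)) by ring, Real.exp_add]
        ring
    -- integrability of the target integrand
    have hGlog : Integrable (fun τ : ℝ =>
        (Real.sqrt (2 * Real.pi))⁻¹ * Real.exp (-τ ^ 2 / 2) *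
        Real.log (1 + (2 * (sM * σμ + 1) * Real.exp (-2 * R * lam n) *
          Real.exp (-2 * φ * Real.sqrt R * τ - 2 * R) +
          Real.exp (-4 * R * lam n) * Real.exp (-4 * φ * Real.sqrt R * τ - 4 * R)))) := by
      apply integrable_w_log
        (u := fun τ => 2 * (sM * σμ + 1) * Real.exp (-2 * R * lam n) *
          Real.exp (-2 * φ * Real.sqrt R * τ - 2 * R) +
          Real.exp (-4 * R * lam n) * Real.exp (-4 * φ * Real.sqrt R * τ - 4 * R))
      · fun_prop
      · intro τ
        have h1 : (0:ℝ) ≤ 2 * (sM * σμ + 1) * Real.exp (-2 * R * lam n) *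
            Real.exp (-2 * φ * Real.sqrt R * τ - 2 * R) := by positivity
        have h2 : (0:ℝ) ≤ Real.exp (-4 * R * lam n) *
            Real.exp (-4 * φ * Real.sqrt R * τ - 4 * R) := by positivity
        linarith
      · have ha := integrable_w_mul
          (2 * (sM * σμ + 1) * Real.exp (-2 * R * lam n) * Real.exp (-(2*R)))
          (-(2 * φ * Real.sqrt R))
        have hb := integrable_w_mul
          (Real.exp (-4 * R * lam n) * Real.exp (-(4*R))) (-(4 * φ * Real.sqrt R))
        refine (ha.add hb).congr (Filter.Eventually.of_forall fun τ => ?_)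
        simp only [Pi.add_apply]
        rw [show -2 * φ * Real.sqrt R * τ - 2 * R
            = (-(2 * φ * Real.sqrt R)) * τ + (-(2*R)) by ring,
          show -4 * φ * Real.sqrt R * τ - 4 * R
            = (-(4 * φ * Real.sqrt R)) * τ + (-(4*R)) by ring,
          Real.exp_add, Real.exp_add]
        ring
    have hGint : Integrable (fun τ : ℝ =>
        (Real.sqrt (2 * Real.pi))⁻¹ * Real.exp (-τ ^ 2 / 2) *
        ((1 / 2) * Real.log (1 + 2 * (sM * σμ + 1) * Real.exp (-2 * R * lam n) *
          Real.exp (-2 * φ * Real.sqrt R * τ - 2 * R) +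
          Real.exp (-4 * R * lam n) * Real.exp (-4 * φ * Real.sqrt R * τ - 4 * R)))) := by
      refine (hGlog.const_mul (1/2)).congr (Filter.Eventually.of_forall fun τ => ?_)
      dsimp only
      ring_nf
    -- pointwise inequality
    have hpt : ∀ τ : ℝ,
        (Real.sqrt (2 * Real.pi))⁻¹ * Real.exp (-τ ^ 2 / 2) *
          (∑ i, Real.log (1 + Real.exp (-2 * R * (lam n + μ i)) *
            Real.exp (-2 * φ * Real.sqrt R * τ - 2 * R)))
        ≤ (2*(K:ℝ)) * ((Real.sqrt (2 * Real.pi))⁻¹ * Real.exp (-τ ^ 2 / 2) *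
          ((1 / 2) * Real.log (1 + 2 * (sM * σμ + 1) * Real.exp (-2 * R * lam n) *
            Real.exp (-2 * φ * Real.sqrt R * τ - 2 * R) +
            Real.exp (-4 * R * lam n) * Real.exp (-4 * φ * Real.sqrt R * τ - 4 * R)))) := by
      intro τ
      set X : ℝ := Real.exp (-2 * φ * Real.sqrt R * τ - 2 * R) with hX
      have hXpos : 0 < X := Real.exp_pos _
      set a : ℝ := Real.exp (-2 * R * lam n) * X with haa
      have hapos : 0 < a := by positivity
      have hsplit : (∑ i, Real.log (1 + Real.exp (-2 * R * (lam n + μ i)) * X))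
          = ∑ l, (Real.log (1 + a * Real.exp (-(2*R*μp l)))
              + Real.log (1 + a * Real.exp (2*R*μp l))) := by
        rw [← Equiv.sum_comp e (fun i =>
          Real.log (1 + Real.exp (-2 * R * (lam n + μ i)) * X)), Fintype.sum_sum_type,
          ← Finset.sum_add_distrib]
        refine Finset.sum_congr rfl fun l _ => ?_
        have hA : ∀ t : ℝ, Real.exp (-2 * R * (lam n + t)) * X
            = a * Real.exp (-(2*R*t)) := by
          intro t
          rw [show -2 * R * (lam n + t) = (-2 * R * lam n) + (-(2*R*t)) by ring,
            Real.exp_add, haa]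
          ring
        congr 2
        · rw [hpos l, hA (μp l)]
        · rw [hneg l, hA (-μp l)]
          congr 2
          ring
      have hkey := key_jensen K hK (fun l => 2*R*μp l) (sM*σμ) hc a hapos
      have hTeq : 1 + 2 * (sM * σμ + 1) * Real.exp (-2 * R * lam n) * X +
          Real.exp (-4 * R * lam n) * Real.exp (-4 * φ * Real.sqrt R * τ - 4 * R)
          = 1 + 2*(sM*σμ+1)*a + a^2 := by
        rw [haa, hX]
        rw [show -4 * R * lam n = (-2 * R * lam n) + (-2 * R * lam n) by ring,
          show -4 * φ * Real.sqrt R * τ - 4 * R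
            = (-2 * φ * Real.sqrt R * τ - 2 * R) + (-2 * φ * Real.sqrt R * τ - 2 * R) by ring,
          Real.exp_add, Real.exp_add]
        ring
      have hS : (∑ i, Real.log (1 + Real.exp (-2 * R * (lam n + μ i)) * X))
          ≤ (2*(K:ℝ)) * ((1 / 2) * Real.log (1 + 2 * (sM * σμ + 1) *
            Real.exp (-2 * R * lam n) * X +
            Real.exp (-4 * R * lam n) * Real.exp (-4 * φ * Real.sqrt R * τ - 4 * R))) := by
        rw [hsplit, hTeq]
        calc ∑ l, (Real.log (1 + a * Real.exp (-(2*R*μp l)))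
              + Real.log (1 + a * Real.exp (2*R*μp l)))
            ≤ (K:ℝ) * Real.log (1 + 2*(sM*σμ+1)*a + a^2) := hkey
          _ = (2*(K:ℝ)) * ((1/2) * Real.log (1 + 2*(sM*σμ+1)*a + a^2)) := by ring
      have hwnn : (0:ℝ) ≤ (Real.sqrt (2 * Real.pi))⁻¹ * Real.exp (-τ ^ 2 / 2) := by positivity
      calc (Real.sqrt (2 * Real.pi))⁻¹ * Real.exp (-τ ^ 2 / 2) *
            (∑ i, Real.log (1 + Real.exp (-2 * R * (lam n + μ i)) * X))
          ≤ (Real.sqrt (2 * Real.pi))⁻¹ * Real.exp (-τ ^ 2 / 2) *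
            ((2*(K:ℝ)) * ((1 / 2) * Real.log (1 + 2 * (sM * σμ + 1) *
              Real.exp (-2 * R * lam n) * X +
              Real.exp (-4 * R * lam n) * Real.exp (-4 * φ * Real.sqrt R * τ - 4 * R)))) :=
            mul_le_mul_of_nonneg_left hS hwnn
        _ = (2*(K:ℝ)) * ((Real.sqrt (2 * Real.pi))⁻¹ * Real.exp (-τ ^ 2 / 2) *
            ((1 / 2) * Real.log (1 + 2 * (sM * σμ + 1) *
              Real.exp (-2 * R * lam n) * X +
              Real.exp (-4 * R * lam n) * Real.exp (-4 * φ * Real.sqrt R * τ - 4 * R)))) := by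
            ring
    -- assemble the integral inequality
    have hSint : Integrable (fun τ : ℝ =>
        (Real.sqrt (2 * Real.pi))⁻¹ * Real.exp (-τ ^ 2 / 2) *
          (∑ i, Real.log (1 + Real.exp (-2 * R * (lam n + μ i)) *
            Real.exp (-2 * φ * Real.sqrt R * τ - 2 * R)))) := by
      have h := integrable_finset_sum (μ := (volume : Measure ℝ)) Finset.univ
        (fun i (_ : i ∈ Finset.univ) => hfint i)
      refine h.congr (Filter.Eventually.of_forall fun τ => ?_)
      dsimp only
      rw [Finset.mul_sum]
    calc ∑ i, gaussExp (fun τ =>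
          Real.log (1 + Real.exp (-2 * R * (lam n + μ i)) *
            Real.exp (-2 * φ * Real.sqrt R * τ - 2 * R)))
        = ∫ τ : ℝ, (Real.sqrt (2 * Real.pi))⁻¹ * Real.exp (-τ ^ 2 / 2) *
            (∑ i, Real.log (1 + Real.exp (-2 * R * (lam n + μ i)) *
              Real.exp (-2 * φ * Real.sqrt R * τ - 2 * R))) := by
          unfold gaussExp
          rw [← integral_finset_sum _ (fun i _ => hfint i)]
          congr 1
          funext τ
          rw [Finset.mul_sum]
      _ ≤ ∫ τ : ℝ, (2*(K:ℝ)) * ((Real.sqrt (2 * Real.pi))⁻¹ * Real.exp (-τ ^ 2 / 2) *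
            ((1 / 2) * Real.log (1 + 2 * (sM * σμ + 1) * Real.exp (-2 * R * lam n) *
              Real.exp (-2 * φ * Real.sqrt R * τ - 2 * R) +
              Real.exp (-4 * R * lam n) * Real.exp (-4 * φ * Real.sqrt R * τ - 4 * R)))) :=
          integral_mono hSint (hGint.const_mul _) hpt
      _ = (2*(K:ℝ)) * gaussExp (fun τ =>
            (1 / 2) * Real.log (1 + 2 * (sM * σμ + 1) * Real.exp (-2 * R * lam n) *
              Real.exp (-2 * φ * Real.sqrt R * τ - 2 * R) +
              Real.exp (-4 * R * lam n) * Real.exp (-4 * φ * Real.sqrt R * τ - 4 * R))) := by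
          rw [integral_const_mul]
          rfl
  -- final assembly
  rw [hF]
  have hstep : ∑ n, ∑ i, gaussExp (fun τ =>
      Real.log (1 + Real.exp (-2 * R * (lam n + μ i)) *
        Real.exp (-2 * φ * Real.sqrt R * τ - 2 * R)))
      ≤ ∑ n, (2*(K:ℝ)) * gaussExp (fun τ =>
        (1 / 2) * Real.log (1 + 2 * (sM * σμ + 1) * Real.exp (-2 * R * lam n) *
          Real.exp (-2 * φ * Real.sqrt R * τ - 2 * R) +
          Real.exp (-4 * R * lam n) * Real.exp (-4 * φ * Real.sqrt R * τ - 4 * R))) :=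
    Finset.sum_le_sum fun n _ => hmain n
  have hcast : ((2 * K * N : ℕ) : ℝ) = 2 * (K:ℝ) * (N:ℝ) := by push_cast; ring
  calc ((2 * K * N : ℕ) : ℝ)⁻¹ * ∑ n, ∑ i, gaussExp (fun τ =>
        Real.log (1 + Real.exp (-2 * R * (lam n + μ i)) *
          Real.exp (-2 * φ * Real.sqrt R * τ - 2 * R)))
      ≤ ((2 * K * N : ℕ) : ℝ)⁻¹ * ∑ n, (2*(K:ℝ)) * gaussExp (fun τ =>
        (1 / 2) * Real.log (1 + 2 * (sM * σμ + 1) * Real.exp (-2 * R * lam n) *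
          Real.exp (-2 * φ * Real.sqrt R * τ - 2 * R) +
          Real.exp (-4 * R * lam n) * Real.exp (-4 * φ * Real.sqrt R * τ - 4 * R))) := by
        apply mul_le_mul_of_nonneg_left hstep
        positivity
    _ = (N : ℝ)⁻¹ * ∑ n, gaussExp (fun τ =>
        (1 / 2) * Real.log (1 + 2 * (sM * σμ + 1) * Real.exp (-2 * R * lam n) *
          Real.exp (-2 * φ * Real.sqrt R * τ - 2 * R) +
          Real.exp (-4 * R * lam n) * Real.exp (-4 * φ * Real.sqrt R * τ - 4 * R))) := by
        rw [← Finset.mul_sum, ← mul_assoc, hcast]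
        congr 1
        field_simp
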